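/- Let k ≥ 2 be an integer and λ ∈ ℂ with Re λ ≥ 0, and let a_n(λ,k) be the sequence defined by a_{−1} = 0, a_0 = 1, a_{n+2} = A_n(λ,k)·a_{n+1} + B_n(λ,k)·a_n. Then there exists N such that a_n(λ,k) ≠ 0 for all n ≥ N, and the ratio r_n(λ,k) = a_{n+1}(λ,k)/a_n(λ,k) converges as n → ∞ either to 1 or to −1/k. -/

import Mathlib

/-- Recurrence coefficient `A_n(λ,k)`. -/
noncomputable def Acoef (k : ℕ) (lam : ℂ) (n : ℤ) : ℂ :=
  ((k : ℂ) * lam ^ 2 + (k : ℂ) * (4 * (n : ℂ) + 9) * lam + 4 * (k : ℂ) * (n : ℂ) ^ 2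
      + 16 * (n : ℂ) * (k : ℂ) - 4 * (n : ℂ) ^ 2 + 14 * (k : ℂ) - 16 * (n : ℂ) - 16)
    / (2 * (k : ℂ) * ((n : ℂ) + 2) * (2 * (n : ℂ) + (k : ℂ) + 8))

/-- Recurrence coefficient `B_n(λ,k)`. -/
noncomputable def Bcoef (k : ℕ) (lam : ℂ) (n : ℤ) : ℂ :=
  ((lam + 2 * (n : ℂ) + 3) * (lam + 2 * (n : ℂ) + 2))
    / (2 * (k : ℂ) * ((n : ℂ) + 2) * (2 * (n : ℂ) + (k : ℂ) + 8))

/-!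
With `x n = a (n + 1) + a n / k` and `y n = a (n + 1) - a n` the recurrence becomes the
perturbed diagonal system `x (n + 1) = x n + e n`, `y (n + 1) = -y n / k + e n`, where
`e n = o(‖x n‖ + ‖y n‖)` because `A_n → 1 - 1/k` and `B_n → 1/k`. Perron's argument: if
`‖y n‖ ≤ ‖x n‖` at some late time, this persists and `y / x → 0`, so the ratio tends to `1`;
otherwise `y` dominates forever, and `x / y → 0` forces the ratio to `-1/k`.
Since `Re λ ≥ 0`, `B_n ≠ 0`, so `a n` and `a (n + 1)` never vanish together.
-/

open Filter Topology

section Contraction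

variable {r : ℝ} {q c : ℕ → ℝ}

lemma tendsto_zero_of_le_mul_add (hr0 : 0 ≤ r) (hr1 : r < 1) (hq0 : ∀ᶠ n in atTop, 0 ≤ q n)
    (hq1 : ∀ᶠ n in atTop, q n ≤ 1) (hc : Tendsto c atTop (𝓝 0))
    (hstep : ∀ᶠ n in atTop, q (n + 1) ≤ r * q n + c n) :
    Tendsto q atTop (𝓝 0) := by
  refine tendsto_order.2 ⟨fun b hb => hq0.mono fun n hn => hb.trans_le hn, fun δ hδ => ?_⟩
  have hcδ : ∀ᶠ n in atTop, c n ≤ δ / 2 * (1 - r) :=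
    hc.eventually (ge_mem_nhds (by nlinarith))
  obtain ⟨N, hN⟩ := eventually_atTop.1 ((hq1.and hstep).and hcδ)
  have key : ∀ m, q (N + m) ≤ r ^ m + δ / 2 := by
    intro m
    induction m with
    | zero => simpa using (hN N le_rfl).1.1.trans (by linarith)
    | succ m ih =>
      obtain ⟨⟨-, hstep⟩, hcm⟩ := hN (N + m) (Nat.le_add_right N m)
      calc q (N + (m + 1)) ≤ r * q (N + m) + c (N + m) := hstep
        _ ≤ r * (r ^ m + δ / 2) + δ / 2 * (1 - r) := by gcongr
        _ = r ^ (m + 1) + δ / 2 := by ring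
  obtain ⟨m, hm⟩ := exists_pow_lt_of_lt_one (half_pos hδ) hr1
  refine eventually_atTop.2 ⟨N + m, fun n hn => ?_⟩
  obtain ⟨j, rfl⟩ := Nat.exists_eq_add_of_le hn
  calc q (N + m + j) ≤ r ^ (m + j) + δ / 2 := by rw [add_assoc]; exact key _
    _ ≤ r ^ m + δ / 2 := by linarith [pow_le_pow_of_le_one hr0 hr1.le (Nat.le_add_right m j)]
    _ < δ := by linarith

lemma tendsto_zero_of_le_mul_succ_add (hr0 : 0 ≤ r) (hr1 : r < 1) (hq0 : ∀ᶠ n in atTop, 0 ≤ q n)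
    (hq1 : ∀ᶠ n in atTop, q n ≤ 1) (hc : Tendsto c atTop (𝓝 0))
    (hstep : ∀ᶠ n in atTop, q n ≤ r * q (n + 1) + c n) :
    Tendsto q atTop (𝓝 0) := by
  refine tendsto_order.2 ⟨fun b hb => hq0.mono fun n hn => hb.trans_le hn, fun δ hδ => ?_⟩
  have hcδ : ∀ᶠ n in atTop, c n ≤ δ / 2 * (1 - r) :=
    hc.eventually (ge_mem_nhds (by nlinarith))
  obtain ⟨N, hN⟩ := eventually_atTop.1 ((hq1.and hstep).and hcδ)
  have key : ∀ m, ∀ n ≥ N, q n ≤ r ^ m + δ / 2 := by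
    intro m
    induction m with
    | zero => intro n hn; simpa using (hN n hn).1.1.trans (by linarith)
    | succ m ih =>
      intro n hn
      obtain ⟨⟨-, hstep⟩, hcn⟩ := hN n hn
      calc q n ≤ r * q (n + 1) + c n := hstep
        _ ≤ r * (r ^ m + δ / 2) + δ / 2 * (1 - r) := by gcongr; exact ih _ (by omega)
        _ = r ^ (m + 1) + δ / 2 := by ring
  obtain ⟨m, hm⟩ := exists_pow_lt_of_lt_one (half_pos hδ) hr1
  exact eventually_atTop.2 ⟨N, fun n hn => (key m n hn).trans_lt (by linarith)⟩

end Contraction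

section Dominance

variable {κ : ℝ} {u v ε : ℕ → ℝ} {N : ℕ}

-- With `ε ≤ (1 - κ) / 4` the region `v ≤ u` is invariant, since `κ + 2 ε ≤ 1 - 2 ε`.
lemma eventually_pos_and_tendsto_div_of_le (hκ0 : 0 ≤ κ) (hκ1 : κ < 1)
    (hu : ∀ n, 0 ≤ u n) (hv : ∀ n, 0 ≤ v n) (huv : ∀ n, 0 < u n + v n)
    (hε0 : ∀ n, 0 ≤ ε n) (hε : Tendsto ε atTop (𝓝 0)) (hεN : ∀ n ≥ N, ε n ≤ (1 - κ) / 4)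
    (hU : ∀ n, u n - ε n * (u n + v n) ≤ u (n + 1))
    (hV : ∀ n, v (n + 1) ≤ κ * v n + ε n * (u n + v n)) (hvuN : v N ≤ u N) :
    (∀ᶠ n in atTop, 0 < u n) ∧ Tendsto (fun n => v n / u n) atTop (𝓝 0) := by
  set ε₀ := (1 - κ) / 4 with hε₀
  have hvu : ∀ n ≥ N, v n ≤ u n := by
    refine Nat.le_induction hvuN fun n hn hvun => ?_
    nlinarith [hU n, hV n, hε0 n, hv n, hεN n hn]
  have hupos : ∀ n ≥ N, 0 < u n := fun n hn => by linarith [huv n, hvu n hn]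
  refine ⟨eventually_atTop.2 ⟨N, hupos⟩, ?_⟩
  have h2ε₀ : 0 < 1 - 2 * ε₀ := by linarith
  refine tendsto_zero_of_le_mul_add (r := κ / (1 - 2 * ε₀)) (c := fun n => 2 * ε n / (1 - 2 * ε₀))
    (by positivity) ((div_lt_one h2ε₀).2 (by linarith))
    (.of_forall fun n => div_nonneg (hv n) (hu n))
    (eventually_atTop.2 ⟨N, fun n hn => div_le_one_of_le₀ (hvu n hn) (hu n)⟩)
    (by simpa using (hε.const_mul 2).div_const (1 - 2 * ε₀))
    (eventually_atTop.2 ⟨N, fun n hn => ?_⟩)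
  have hun := hupos n hn
  have hu' : (1 - 2 * ε₀) * u n ≤ u (n + 1) := by
    nlinarith [hU n, hvu n hn, hε0 n, hεN n hn]
  have hv' : v (n + 1) ≤ κ * v n + 2 * ε n * u n := by
    nlinarith [hV n, hvu n hn, hε0 n]
  calc v (n + 1) / u (n + 1) ≤ (κ * v n + 2 * ε n * u n) / ((1 - 2 * ε₀) * u n) :=
        div_le_div₀ (by nlinarith [hε0 n, hv n]) hv' (mul_pos h2ε₀ hun) hu'
    _ = κ / (1 - 2 * ε₀) * (v n / u n) + 2 * ε n / (1 - 2 * ε₀) := by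
        field_simp

lemma eventually_pos_and_tendsto_div_of_lt (hκ0 : 0 ≤ κ) (hκ1 : κ < 1) (hu : ∀ n, 0 ≤ u n)
    (hε0 : ∀ n, 0 ≤ ε n) (hε : Tendsto ε atTop (𝓝 0)) (hεN : ∀ n ≥ N, ε n ≤ (1 - κ) / 4)
    (hU : ∀ n, u n - ε n * (u n + v n) ≤ u (n + 1))
    (hV : ∀ n, v (n + 1) ≤ κ * v n + ε n * (u n + v n)) (huv : ∀ n ≥ N, u n < v n) :
    (∀ᶠ n in atTop, 0 < v n) ∧ Tendsto (fun n => u n / v n) atTop (𝓝 0) := by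
  have hvpos : ∀ n ≥ N, 0 < v n := fun n hn => (hu n).trans_lt (huv n hn)
  refine ⟨eventually_atTop.2 ⟨N, hvpos⟩, ?_⟩
  refine tendsto_zero_of_le_mul_succ_add (r := (1 + κ) / 2) (c := fun n => 2 * ε n) (by linarith)
    (by linarith) (eventually_atTop.2 ⟨N, fun n hn => div_nonneg (hu n) (hvpos n hn).le⟩)
    (eventually_atTop.2 ⟨N, fun n hn => div_le_one_of_le₀ (huv n hn).le (hvpos n hn).le⟩)
    (by simpa using hε.const_mul 2) (eventually_atTop.2 ⟨N, fun n hn => ?_⟩)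
  have hu' : u n ≤ u (n + 1) + 2 * ε n * v n := by
    nlinarith [hU n, huv n hn, hε0 n]
  have hv' : v (n + 1) ≤ (1 + κ) / 2 * v n := by
    nlinarith [hV n, mul_le_mul_of_nonneg_left (huv n hn).le (hε0 n),
      mul_le_mul_of_nonneg_right (hεN n hn) (hvpos n hn).le]
  rw [div_le_iff₀ (hvpos n hn)]
  calc u n ≤ u (n + 1) + 2 * ε n * v n := hu'
    _ ≤ (1 + κ) / 2 * (u (n + 1) / v (n + 1)) * v n + 2 * ε n * v n := by
        gcongr
        rw [show (1 + κ) / 2 * (u (n + 1) / v (n + 1)) * v n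
          = u (n + 1) * ((1 + κ) / 2 * v n / v (n + 1)) by ring]
        exact le_mul_of_one_le_right (hu _) ((one_le_div (hvpos _ (by omega))).2 hv')
    _ = _ := by ring

end Dominance

lemma dominance_dichotomy {κ : ℝ} (hκ0 : 0 ≤ κ) (hκ1 : κ < 1) {u v ε : ℕ → ℝ}
    (hu : ∀ n, 0 ≤ u n) (hv : ∀ n, 0 ≤ v n) (huv : ∀ n, 0 < u n + v n)
    (hε0 : ∀ n, 0 ≤ ε n) (hε : Tendsto ε atTop (𝓝 0))
    (hU : ∀ n, u n - ε n * (u n + v n) ≤ u (n + 1))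
    (hV : ∀ n, v (n + 1) ≤ κ * v n + ε n * (u n + v n)) :
    (∀ᶠ n in atTop, 0 < u n) ∧ Tendsto (fun n => v n / u n) atTop (𝓝 0) ∨
      (∀ᶠ n in atTop, 0 < v n) ∧ Tendsto (fun n => u n / v n) atTop (𝓝 0) := by
  have hκ4 : 0 < (1 - κ) / 4 := by linarith
  obtain ⟨N₀, hN₀⟩ := eventually_atTop.1 (hε.eventually (ge_mem_nhds hκ4))
  by_cases hcase : ∃ N ≥ N₀, v N ≤ u N
  · obtain ⟨N, hNN₀, hvuN⟩ := hcase
    exact .inl (eventually_pos_and_tendsto_div_of_le hκ0 hκ1 hu hv huv hε0 hε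
      (fun n hn => hN₀ n (hNN₀.trans hn)) hU hV hvuN)
  · push Not at hcase
    exact .inr (eventually_pos_and_tendsto_div_of_lt hκ0 hκ1 hu hε0 hε hN₀ hU hV hcase)

section NormedField

variable {𝕜 : Type*} [NormedField 𝕜]

lemma perturbed_diagonal_dichotomy {t : 𝕜} (ht : ‖t‖ < 1) {x y e f : ℕ → 𝕜} {ε : ℕ → ℝ}
    (hε0 : ∀ n, 0 ≤ ε n) (hε : Tendsto ε atTop (𝓝 0))
    (hx : ∀ n, x (n + 1) = x n + e n) (hy : ∀ n, y (n + 1) = t * y n + f n)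
    (he : ∀ n, ‖e n‖ ≤ ε n * (‖x n‖ + ‖y n‖)) (hf : ∀ n, ‖f n‖ ≤ ε n * (‖x n‖ + ‖y n‖))
    (hxy : ∀ n, x n ≠ 0 ∨ y n ≠ 0) :
    (∀ᶠ n in atTop, x n ≠ 0) ∧ Tendsto (fun n => y n / x n) atTop (𝓝 0) ∨
      (∀ᶠ n in atTop, y n ≠ 0) ∧ Tendsto (fun n => x n / y n) atTop (𝓝 0) := by
  have hpos : ∀ n, 0 < ‖x n‖ + ‖y n‖ := fun n => by
    rcases hxy n with h | h
    · exact add_pos_of_pos_of_nonneg (norm_pos_iff.2 h) (norm_nonneg _)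
    · exact add_pos_of_nonneg_of_pos (norm_nonneg _) (norm_pos_iff.2 h)
  have hU : ∀ n, ‖x n‖ - ε n * (‖x n‖ + ‖y n‖) ≤ ‖x (n + 1)‖ := fun n => by
    rw [hx]; linarith [norm_sub_le_norm_add (x n) (e n), he n]
  have hV : ∀ n, ‖y (n + 1)‖ ≤ ‖t‖ * ‖y n‖ + ε n * (‖x n‖ + ‖y n‖) := fun n => by
    rw [hy, ← norm_mul]; linarith [norm_add_le (t * y n) (f n), hf n]
  rcases dominance_dichotomy (norm_nonneg t) ht (fun n => norm_nonneg _)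
    (fun n => norm_nonneg _) hpos hε0 hε hU hV with ⟨hne, hlim⟩ | ⟨hne, hlim⟩
  · exact .inl ⟨hne.mono fun n => norm_pos_iff.1,
      tendsto_zero_iff_norm_tendsto_zero.2 (by simpa only [norm_div] using hlim)⟩
  · exact .inr ⟨hne.mono fun n => norm_pos_iff.1,
      tendsto_zero_iff_norm_tendsto_zero.2 (by simpa only [norm_div] using hlim)⟩

lemma ratio_dichotomy_of_dominance {t : 𝕜} (hs : 1 - t ≠ 0) {a x y : ℕ → 𝕜}
    (hxy_a : ∀ n, (1 - t) * a n = x n - y n) (hxy_a' : ∀ n, (1 - t) * a (n + 1) = x n - t * y n)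
    (hdom : (∀ᶠ n in atTop, x n ≠ 0) ∧ Tendsto (fun n => y n / x n) atTop (𝓝 0) ∨
      (∀ᶠ n in atTop, y n ≠ 0) ∧ Tendsto (fun n => x n / y n) atTop (𝓝 0)) :
    (∀ᶠ n in atTop, a n ≠ 0) ∧ (Tendsto (fun n => a (n + 1) / a n) atTop (𝓝 1) ∨
      Tendsto (fun n => a (n + 1) / a n) atTop (𝓝 t)) := by
  have ha_ne : ∀ n, x n ≠ y n → a n ≠ 0 := fun n hne h0 =>
    hne (by linear_combination (1 - t) * h0 - hxy_a n)
  rcases hdom with ⟨hx0, hyx⟩ | ⟨hy0, hxy⟩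
  · have hden : Tendsto (fun n => 1 - y n / x n) atTop (𝓝 1) := by
      simpa using hyx.const_sub 1
    have hratio : ∀ᶠ n in atTop, (1 - t * (y n / x n)) / (1 - y n / x n) = a (n + 1) / a n := by
      filter_upwards [hx0] with n hxn
      rw [← mul_div_mul_left (a (n + 1)) _ hs, hxy_a' n, hxy_a n]
      field_simp
    refine ⟨?_, .inl (Tendsto.congr' hratio ?_)⟩
    · filter_upwards [hx0, hden.eventually_ne one_ne_zero] with n hxn hd
      exact ha_ne n fun h => hd (by rw [h, div_self (h ▸ hxn), sub_self])
    · simpa [Pi.div_def] using (hyx.const_mul t).const_sub 1 |>.div hden one_ne_zero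
  · have hden : Tendsto (fun n => x n / y n - 1) atTop (𝓝 (-1)) := by
      simpa using hxy.sub_const 1
    have hratio : ∀ᶠ n in atTop, (x n / y n - t) / (x n / y n - 1) = a (n + 1) / a n := by
      filter_upwards [hy0] with n hyn
      rw [← mul_div_mul_left (a (n + 1)) _ hs, hxy_a' n, hxy_a n]
      field_simp
    refine ⟨?_, .inr (Tendsto.congr' hratio ?_)⟩
    · filter_upwards [hy0, hden.eventually_ne (neg_ne_zero.2 one_ne_zero)] with n hyn hd
      exact ha_ne n fun h => hd (by rw [h, div_self hyn, sub_self])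
    · simpa [Pi.div_def] using (hxy.sub_const t).div hden (neg_ne_zero.2 one_ne_zero)

theorem ratio_dichotomy_of_tendsto_coeff {t : 𝕜} (ht : ‖t‖ < 1) {a A B : ℕ → 𝕜}
    (hA : Tendsto A atTop (𝓝 (1 + t))) (hB : Tendsto B atTop (𝓝 (-t)))
    (hrec : ∀ n, a (n + 2) = A n * a (n + 1) + B n * a n)
    (ha : ∀ n, a n ≠ 0 ∨ a (n + 1) ≠ 0) :
    (∀ᶠ n in atTop, a n ≠ 0) ∧ (Tendsto (fun n => a (n + 1) / a n) atTop (𝓝 1) ∨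
      Tendsto (fun n => a (n + 1) / a n) atTop (𝓝 t)) := by
  set x : ℕ → 𝕜 := fun n => a (n + 1) - t * a n
  set y : ℕ → 𝕜 := fun n => a (n + 1) - a n
  set e : ℕ → 𝕜 := fun n => (A n - (1 + t)) * a (n + 1) + (B n + t) * a n
  have hs : (1 - t : 𝕜) ≠ 0 := fun h => by
    simp [show t = 1 by linear_combination -h] at ht
  have hxy_a : ∀ n, (1 - t) * a n = x n - y n := fun n => by ring
  have hxy_a' : ∀ n, (1 - t) * a (n + 1) = x n - t * y n := fun n => by ring
  have hx : ∀ n, x (n + 1) = x n + e n := fun n => by simp only [x, e, hrec]; ring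
  have hy : ∀ n, y (n + 1) = t * y n + e n := fun n => by simp only [y, e, hrec]; ring
  set ε : ℕ → ℝ := fun n => (‖A n - (1 + t)‖ + ‖B n + t‖) / ‖1 - t‖
  have hε : Tendsto ε atTop (𝓝 0) := by
    simpa [ε] using (((hA.sub_const (1 + t)).norm.add (hB.add_const t).norm).div_const ‖1 - t‖)
  have hnorm : ∀ n, ‖a n‖ ≤ (‖x n‖ + ‖y n‖) / ‖1 - t‖ ∧
      ‖a (n + 1)‖ ≤ (‖x n‖ + ‖y n‖) / ‖1 - t‖ := fun n => by
    simp only [le_div_iff₀ (norm_pos_iff.2 hs), mul_comm _ ‖1 - t‖, ← norm_mul, hxy_a' n, hxy_a n]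
    refine ⟨norm_sub_le _ _, (norm_sub_le _ _).trans ?_⟩
    rw [norm_mul]
    nlinarith [norm_nonneg (y n)]
  have he : ∀ n, ‖e n‖ ≤ ε n * (‖x n‖ + ‖y n‖) := fun n => by
    calc ‖e n‖ ≤ ‖A n - (1 + t)‖ * ‖a (n + 1)‖ + ‖B n + t‖ * ‖a n‖ := by
          simp only [e, ← norm_mul]; exact norm_add_le _ _
      _ ≤ ‖A n - (1 + t)‖ * ((‖x n‖ + ‖y n‖) / ‖1 - t‖)
          + ‖B n + t‖ * ((‖x n‖ + ‖y n‖) / ‖1 - t‖) := by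
          gcongr
          exacts [(hnorm n).2, (hnorm n).1]
      _ = ε n * (‖x n‖ + ‖y n‖) := by ring
  have hxy_ne : ∀ n, x n ≠ 0 ∨ y n ≠ 0 := fun n => by
    by_contra! h
    rcases ha n with h' | h'
    · exact h' (by simpa [hs, h.1, h.2] using hxy_a n)
    · exact h' (by simpa [hs, h.1, h.2] using hxy_a' n)
  exact ratio_dichotomy_of_dominance hs hxy_a hxy_a'
    (perturbed_diagonal_dichotomy ht (fun n => by positivity) hε hx hy he he hxy_ne)

end NormedField

lemma tendsto_quadratic_div_quadratic {𝕜 : Type*} [RCLike 𝕜] (p₂ p₁ p₀ q₂ q₁ q₀ : 𝕜)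
    (hq : q₂ ≠ 0) :
    Tendsto (fun n : ℕ => (p₂ * n ^ 2 + p₁ * n + p₀) / (q₂ * n ^ 2 + q₁ * n + q₀)) atTop
      (𝓝 (p₂ / q₂)) := by
  have hz : Tendsto (fun n : ℕ => (n : 𝕜)⁻¹) atTop (𝓝 0) := tendsto_inv_atTop_nhds_zero_nat
  have hlim : Tendsto (fun n : ℕ => (p₂ + p₁ * (n : 𝕜)⁻¹ + p₀ * (n : 𝕜)⁻¹ ^ 2) /
      (q₂ + q₁ * (n : 𝕜)⁻¹ + q₀ * (n : 𝕜)⁻¹ ^ 2)) atTop (𝓝 (p₂ / q₂)) := by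
    simpa [Pi.div_def] using
      (((hz.const_mul p₁).const_add p₂).add ((hz.pow 2).const_mul p₀)).div
        (((hz.const_mul q₁).const_add q₂).add ((hz.pow 2).const_mul q₀)) (by simpa using hq)
  refine hlim.congr' (eventually_atTop.2 ⟨1, fun n hn => ?_⟩)
  have hn0 : (n : 𝕜) ≠ 0 := Nat.cast_ne_zero.2 (by omega)
  have hscale : ∀ c₂ c₁ c₀ : 𝕜,
      c₂ + c₁ * (n : 𝕜)⁻¹ + c₀ * (n : 𝕜)⁻¹ ^ 2 = (c₂ * n ^ 2 + c₁ * n + c₀) / n ^ 2 := by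
    intro c₂ c₁ c₀
    field_simp
  rw [hscale, hscale, div_div_div_cancel_right₀ (pow_ne_zero 2 hn0)]

lemma tendsto_Acoef {k : ℕ} (hk : k ≠ 0) (lam : ℂ) :
    Tendsto (fun n : ℕ => Acoef k lam n) atTop (𝓝 (1 + -1 / k)) := by
  convert tendsto_quadratic_div_quadratic (4 * k - 4 : ℂ) (4 * k * lam + 16 * k - 16)
    (k * lam ^ 2 + 9 * k * lam + 14 * k - 16) (4 * k) (2 * k * (k + 12)) (4 * k * (k + 8))
    (by simpa using hk) using 2 with n
  · simp only [Acoef]; push_cast; ring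
  · field_simp; ring

lemma tendsto_Bcoef {k : ℕ} (hk : k ≠ 0) (lam : ℂ) :
    Tendsto (fun n : ℕ => Bcoef k lam n) atTop (𝓝 (-(-1 / k))) := by
  convert tendsto_quadratic_div_quadratic (4 : ℂ) (4 * lam + 10) ((lam + 3) * (lam + 2))
    (4 * k) (2 * k * (k + 12)) (4 * k * (k + 8)) (by simpa using hk) using 2 with n
  · simp only [Bcoef]; push_cast; ring
  · field_simp

lemma Bcoef_ne_zero {k : ℕ} (hk : k ≠ 0) {lam : ℂ} (hre : 0 ≤ lam.re) (n : ℕ) :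
    Bcoef k lam n ≠ 0 := by
  have hfactor : ∀ c : ℕ, lam + 2 * n + (c + 2 : ℕ) ≠ 0 := fun c h => by
    have := congrArg Complex.re h
    simp at this
    linarith
  have hden : (2 * k * (n + 2) * (2 * n + k + 8) : ℂ) ≠ 0 := by
    have := Nat.pos_of_ne_zero hk
    exact_mod_cast (by positivity : 2 * k * (n + 2) * (2 * n + k + 8) ≠ 0)
  simp only [Bcoef, Int.cast_natCast]
  exact div_ne_zero (mul_ne_zero (by simpa using hfactor 1) (by simpa using hfactor 0)) hden

lemma ne_zero_or_succ_ne_zero {R : Type*} [Ring R] [NoZeroDivisors R] {a A B : ℕ → R}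
    (h0 : a 0 ≠ 0) (hB : ∀ n, B n ≠ 0) (hrec : ∀ n, a (n + 2) = A n * a (n + 1) + B n * a n) :
    ∀ n, a n ≠ 0 ∨ a (n + 1) ≠ 0 := by
  intro n
  induction n with
  | zero => exact .inl h0
  | succ n ih =>
    by_contra! h
    have hBa : B n * a n = 0 := by simpa [h.1, h.2] using (hrec n).symm
    exact ih.elim (fun h' => h' ((mul_eq_zero.1 hBa).resolve_left (hB n))) (· h.1)

theorem ratio_dichotomy_general (k : ℕ) (hk : 2 ≤ k) (lam : ℂ) (hre : 0 ≤ lam.re) (a : ℕ → ℂ)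
    (ha0 : a 0 = 1)
    (harec : ∀ n : ℕ, a (n + 2) = Acoef k lam n * a (n + 1) + Bcoef k lam n * a n) :
    (∃ N : ℕ, ∀ n ≥ N, a n ≠ 0) ∧
      (Filter.Tendsto (fun n => a (n + 1) / a n) Filter.atTop (nhds 1) ∨
        Filter.Tendsto (fun n => a (n + 1) / a n) Filter.atTop (nhds (-1 / (k : ℂ)))) := by
  have hk0 : k ≠ 0 := by omega
  have ht : ‖(-1 / k : ℂ)‖ < 1 := by
    rw [norm_div, norm_neg, norm_one, Complex.norm_natCast, div_lt_one (by positivity)]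
    exact_mod_cast hk
  have hne := ne_zero_or_succ_ne_zero (ha0 ▸ one_ne_zero) (Bcoef_ne_zero hk0 hre) harec
  obtain ⟨hev, hlim⟩ := ratio_dichotomy_of_tendsto_coeff ht (tendsto_Acoef hk0 lam)
    (tendsto_Bcoef hk0 lam) harec hne
  exact ⟨eventually_atTop.1 hev, hlim⟩

/-- Poincaré dichotomy: the terms `aₙ` are eventually nonzero and the ratios
`aₙ₊₁/aₙ` converge either to `1` or to `-1/k`. -/
theorem ratio_dichotomy (k : ℕ) (hk : 2 ≤ k) (lam : ℂ) (hre : 0 ≤ lam.re) (a : ℕ → ℂ)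
    (ha0 : a 0 = 1) (ha1 : a 1 = Acoef k lam (-1))
    (harec : ∀ n : ℕ, a (n + 2) = Acoef k lam n * a (n + 1) + Bcoef k lam n * a n) :
    (∃ N : ℕ, ∀ n ≥ N, a n ≠ 0) ∧
      (Filter.Tendsto (fun n => a (n + 1) / a n) Filter.atTop (nhds 1) ∨
        Filter.Tendsto (fun n => a (n + 1) / a n) Filter.atTop (nhds (-1 / (k : ℂ)))) :=
  ratio_dichotomy_general k hk lam hre a ha0 harec
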